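/- arXiv:1705.05227 — 9 statements merged into one kernel-verified Lean document; each statement's English description precedes it below -/
import Mathlib

section
/- In End_K(K[x]), define e_{ij} := ∫^i ∂^j − ∫^{i+1} ∂^{j+1} for i,j ∈ ℕ, where ∂ is differentiation and ∫ is integration. Then e_{ij} e_{kl} = δ_{jk} e_{il} (matrix unit relations). -/
/-!
Differentiation `∂` is a left inverse of integration `∫`, and this alone forces the relations:
in any ring with `a * b = 1`, the element `p = 1 - b * a` is an idempotent with `a * p = 0 = p * b`,
and `b ^ i * a ^ j - b ^ (i + 1) * a ^ (j + 1) = b ^ i * p * a ^ j`. In a product of two of these,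
the middle factor `a ^ j * b ^ k` collapses to `1`, to a positive power of `b`, or to a positive
power of `a`, and the last two are killed by the neighbouring `p`.
-/

open Polynomial

section LeftInverse

variable {R : Type*} [Ring R] {a b : R}

theorem mul_one_sub_mul_eq_zero (h : a * b = 1) : a * (1 - b * a) = 0 := by
  rw [mul_sub, mul_one, ← mul_assoc, h, one_mul, sub_self]

theorem one_sub_mul_mul_eq_zero (h : a * b = 1) : (1 - b * a) * b = 0 := by
  rw [sub_mul, one_mul, mul_assoc, h, mul_one, sub_self]

theorem isIdempotentElem_one_sub_mul (h : a * b = 1) : IsIdempotentElem (1 - b * a) := by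
  refine IsIdempotentElem.one_sub ?_
  rw [IsIdempotentElem, mul_assoc, ← mul_assoc a, h, one_mul]

theorem pow_mul_pow_of_le (h : a * b = 1) {m n : ℕ} (hmn : m ≤ n) :
    a ^ m * b ^ n = b ^ (n - m) := by
  rw [← Nat.add_sub_cancel' hmn, pow_add, ← mul_assoc, pow_mul_pow_eq_one m h, one_mul,
    Nat.add_sub_cancel_left]

theorem pow_mul_pow_of_ge (h : a * b = 1) {m n : ℕ} (hnm : n ≤ m) :
    a ^ m * b ^ n = a ^ (m - n) := by
  rw [← Nat.sub_add_cancel hnm, pow_add, mul_assoc, pow_mul_pow_eq_one n h, mul_one,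
    Nat.add_sub_cancel]

theorem pow_mul_sub_pow_succ_mul_pow_succ (i j : ℕ) :
    b ^ i * a ^ j - b ^ (i + 1) * a ^ (j + 1) = b ^ i * (1 - b * a) * a ^ j := by
  rw [pow_succ, pow_succ', mul_sub, sub_mul, mul_one, mul_assoc, mul_assoc, mul_assoc]

theorem one_sub_mul_mul_pow_mul_one_sub_mul (h : a * b = 1) (m n : ℕ) :
    (1 - b * a) * (a ^ m * b ^ n) * (1 - b * a) = if m = n then 1 - b * a else 0 := by
  split_ifs with hmn
  · rw [hmn, pow_mul_pow_eq_one n h, mul_one, isIdempotentElem_one_sub_mul h]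
  rcases Nat.lt_or_gt_of_ne hmn with hlt | hgt
  · obtain ⟨t, ht⟩ : ∃ t, n - m = t + 1 := ⟨n - m - 1, by omega⟩
    rw [pow_mul_pow_of_le h hlt.le, ht, pow_succ', ← mul_assoc, one_sub_mul_mul_eq_zero h,
      zero_mul, zero_mul]
  · obtain ⟨t, ht⟩ : ∃ t, m - n = t + 1 := ⟨m - n - 1, by omega⟩
    rw [pow_mul_pow_of_ge h hgt.le, ht, pow_succ, mul_assoc, mul_assoc,
      mul_one_sub_mul_eq_zero h, mul_zero, mul_zero]

theorem matrixUnits_mul (h : a * b = 1) (i j k l : ℕ) :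
    (b ^ i * a ^ j - b ^ (i + 1) * a ^ (j + 1)) * (b ^ k * a ^ l - b ^ (k + 1) * a ^ (l + 1)) =
      if j = k then b ^ i * a ^ l - b ^ (i + 1) * a ^ (l + 1) else 0 := by
  have hassoc : b ^ i * (1 - b * a) * a ^ j * (b ^ k * (1 - b * a) * a ^ l) =
      b ^ i * ((1 - b * a) * (a ^ j * b ^ k) * (1 - b * a)) * a ^ l := by
    simp only [mul_assoc]
  simp only [pow_mul_sub_pow_succ_mul_pow_succ]
  rw [hassoc, one_sub_mul_mul_pow_mul_one_sub_mul h]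
  split_ifs <;> simp only [mul_zero, zero_mul]

end LeftInverse

theorem Polynomial.lhom_ext_X_pow {K : Type*} [Field K] {f g : Module.End K K[X]}
    (h : ∀ n : ℕ, f (X ^ n) = g (X ^ n)) : f = g :=
  (basisMonomials K).ext fun n => by simpa [coe_basisMonomials, ← X_pow_eq_monomial] using h n

/-- In `End_K(K[x])`, the elements `e i j = ∫^i ∂^j - ∫^(i+1) ∂^(j+1)` satisfy the matrix
unit relations `e i j * e k l = δ_{jk} e i l`. -/
theorem matrix_unit_relations (K : Type*) [Field K] [CharZero K]
    (D J : Module.End K (Polynomial K))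
    (hD : ∀ p : Polynomial K, D p = derivative p)
    (hJ : ∀ n : ℕ, J (X ^ n) = ((n : K) + 1)⁻¹ • X ^ (n + 1))
    (e : ℕ → ℕ → Module.End K (Polynomial K))
    (he : ∀ i j, e i j = J ^ i * D ^ j - J ^ (i + 1) * D ^ (j + 1)) :
    ∀ i j k l, e i j * e k l = if j = k then e i l else 0 := by
  have hDJ : D * J = 1 := Polynomial.lhom_ext_X_pow fun n => by
    rw [Module.End.mul_apply, hJ, map_smul, hD, derivative_X_pow, Module.End.one_apply,
      ← smul_eq_C_mul, smul_smul, Nat.cast_succ,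
      inv_mul_cancel₀ (Nat.cast_add_one_ne_zero n), one_smul, Nat.add_sub_cancel]
  intro i j k l
  simp only [he]
  exact matrixUnits_mul hDJ i j k l
end

section
/- In End_K(K[x]), e_{ij} = (j!/i!) E_{ij}, where e_{ij} := ∫^i ∂^j − ∫^{i+1} ∂^{j+1} and E_{ij} is the matrix unit with respect to the monomial basis, i.e. E_{ij}(x^s) = δ_{js} x^i. -/
/-!
Since `∫` inverts `∂` on nonconstant monomials, `1 - ∫∂` sends `p` to its constant term `p(0)`.
Hence `e i j = ∫^i (1 - ∫∂) ∂^j` maps `p` to `∫^i` of the constant `(∂^j p)(0) = j! · [x^j] p`,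
and `∫^i 1 = x^i / i!`.
-/

open Polynomial

section

variable {K : Type*} [Field K]

theorem apply_derivative_X_pow_succ [CharZero K] {J : Module.End K K[X]}
    (hJ : ∀ n : ℕ, J (X ^ n) = ((n : K) + 1)⁻¹ • X ^ (n + 1)) (n : ℕ) :
    J (derivative (X ^ (n + 1))) = X ^ (n + 1) := by
  rw [derivative_X_pow, Nat.add_sub_cancel, ← smul_eq_C_mul, map_smul, hJ, smul_smul,
    Nat.cast_succ, mul_inv_cancel₀ (Nat.cast_add_one_ne_zero n), one_smul]

theorem sub_apply_derivative_eq_C_coeff_zero [CharZero K] {J : Module.End K K[X]}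
    (hJ : ∀ n : ℕ, J (X ^ n) = ((n : K) + 1)⁻¹ • X ^ (n + 1)) (p : K[X]) :
    p - J (derivative p) = C (p.coeff 0) := by
  induction p using Polynomial.induction_on' with
  | add p q hp hq =>
    rw [map_add, map_add, coeff_add, C_add, ← hp, ← hq]
    abel
  | monomial n a =>
    rw [← C_mul_X_pow_eq_monomial, ← smul_eq_C_mul, derivative_smul, map_smul, coeff_smul,
      coeff_X_pow]
    cases n with
    | zero =>
      rw [pow_zero, derivative_one, map_zero, smul_zero, sub_zero, if_pos rfl, smul_eq_C_mul,
        mul_one, smul_eq_mul, mul_one]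
    | succ n =>
      rw [apply_derivative_X_pow_succ hJ, sub_self, if_neg n.succ_ne_zero.symm, smul_zero, C_0]

theorem pow_apply_one_eq_smul_X_pow {J : Module.End K K[X]}
    (hJ : ∀ n : ℕ, J (X ^ n) = ((n : K) + 1)⁻¹ • X ^ (n + 1)) (i : ℕ) :
    (J ^ i) 1 = (i.factorial : K)⁻¹ • X ^ i := by
  induction i with
  | zero => simp
  | succ i ih =>
    rw [pow_succ', Module.End.mul_apply, ih, map_smul, hJ, smul_smul, Nat.factorial_succ,
      Nat.cast_mul, Nat.cast_succ, mul_inv, mul_comm]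

theorem pow_mul_derivative_pow_sub_pow_succ_mul_apply [CharZero K] {J : Module.End K K[X]}
    (hJ : ∀ n : ℕ, J (X ^ n) = ((n : K) + 1)⁻¹ • X ^ (n + 1)) (i j : ℕ) (p : K[X]) :
    (J ^ i * derivative ^ j - J ^ (i + 1) * derivative ^ (j + 1) : Module.End K K[X]) p =
      ((j.factorial : K) / i.factorial * p.coeff j) • X ^ i := by
  have hfactor : J ^ i * derivative ^ j - J ^ (i + 1) * derivative ^ (j + 1) =
      J ^ i * (1 - J * derivative) * derivative ^ j := by
    rw [pow_succ, pow_succ', mul_sub, sub_mul, mul_one, mul_assoc, mul_assoc, mul_assoc]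
  rw [hfactor, Module.End.mul_apply, Module.End.mul_apply, LinearMap.sub_apply,
    Module.End.one_apply, Module.End.mul_apply, sub_apply_derivative_eq_C_coeff_zero hJ,
    C_eq_algebraMap, Algebra.algebraMap_eq_smul_one, map_smul, pow_apply_one_eq_smul_X_pow hJ,
    smul_smul, Module.End.pow_apply, coeff_iterate_derivative, zero_add, Nat.descFactorial_self,
    nsmul_eq_mul]
  congr 1
  ring

end

/-- In `End_K(K[x])`, `e i j = (j!/i!) • E i j` where `E i j` are the matrix units with
respect to the monomial basis, i.e. `E i j (x^s) = δ_{js} x^i`. -/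
theorem matrix_unit_comparison (K : Type*) [Field K] [CharZero K]
    (D J : Module.End K (Polynomial K))
    (hD : ∀ p : Polynomial K, D p = derivative p)
    (hJ : ∀ n : ℕ, J (X ^ n) = ((n : K) + 1)⁻¹ • X ^ (n + 1))
    (e : ℕ → ℕ → Module.End K (Polynomial K))
    (he : ∀ i j, e i j = J ^ i * D ^ j - J ^ (i + 1) * D ^ (j + 1))
    (E : ℕ → ℕ → Module.End K (Polynomial K))
    (hE : ∀ i j s : ℕ, E i j (X ^ s) = if j = s then X ^ i else 0) :
    ∀ i j, e i j = ((j.factorial : K) / (i.factorial : K)) • E i j := by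
  obtain rfl : D = derivative := LinearMap.ext hD
  intro i j
  refine (basisMonomials K).ext fun s => ?_
  simp only [coe_basisMonomials, ← X_pow_eq_monomial]
  rw [he, LinearMap.smul_apply, hE, pow_mul_derivative_pow_sub_pow_succ_mul_apply hJ, coeff_X_pow]
  split_ifs <;> simp
end

section
/- Let 𝕀₁ ⊆ End_K(K[x]) be the subalgebra generated by x (multiplication), ∂ (differentiation) and ∫ (integration). Then for all n ≥ 1, 𝕀₁ = 𝕀₁∂^n ⊕ 𝕀₁e_{00} ⊕ ⋯ ⊕ 𝕀₁e_{n−1,n−1} as left 𝕀₁-modules, where e_{ii} = ∫^i∂^i − ∫^{i+1}∂^{i+1}. -/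
/-!
The operators `P i = ∫^i ∂^i` act on monomials by `x^m ↦ [i ≤ m] x^m`, so `P 0 = 1` and
`P i P j = P (max i j)`. Hence `P n, e₀₀ = P 0 - P 1, …, e_{n-1,n-1} = P (n-1) - P n` is a complete
family of orthogonal idempotents, and any ring is the direct sum of the left ideals generated by
such a family. Finally `𝕀₁ ∂^n = 𝕀₁ ∫^n ∂^n`, because `∂^n ∫^n = 1`.
-/

open Polynomial

theorem CompleteOrthogonalIdempotents.isInternal_span_singleton {R ι : Type*} [Ring R]
    [Fintype ι] [DecidableEq ι] {e : ι → R} (he : CompleteOrthogonalIdempotents e) :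
    DirectSum.IsInternal fun i => Submodule.span R {e i} := by
  refine DirectSum.isInternal_submodule_of_iSupIndep_of_iSup_eq_top
    (fun i => Submodule.disjoint_def.2 fun x hx hx' => ?_) ?_
  · -- right multiplication by `e i` fixes `R e i` and kills every other `R e k`
    have hker : (⨆ (k) (_ : k ≠ i), Submodule.span R {e k}) ≤
        LinearMap.ker (LinearMap.toSpanSingleton R R (e i)) :=
      iSup₂_le fun k hk => (Submodule.span_singleton_le_iff_mem _ _).2 (he.ortho hk)
    obtain ⟨a, rfl⟩ := Submodule.mem_span_singleton.1 hx
    simpa [mul_assoc, (he.idem i).eq] using hker hx'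
  · refine eq_top_iff.2 fun x _ => ?_
    rw [← mul_one x, ← he.complete, Finset.mul_sum]
    exact Submodule.sum_mem _ fun i _ => Submodule.mem_iSup_of_mem i
      (Submodule.smul_mem _ x (Submodule.mem_span_singleton_self _))

theorem Submodule.span_singleton_eq_span_singleton_mul_of_mul_eq_one {R : Type*} [Semiring R]
    {u v : R} (h : u * v = 1) : span R {u} = span R {v * u} :=
  le_antisymm
    ((span_singleton_le_iff_mem _ _).2 (mem_span_singleton.2 ⟨u, by
      rw [smul_eq_mul, ← mul_assoc, h, one_mul]⟩))
    ((span_singleton_le_iff_mem _ _).2 (mem_span_singleton.2 ⟨v, rfl⟩))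

theorem completeOrthogonalIdempotents_cons_sub {R : Type*} [Ring R] {P : ℕ → R} (h0 : P 0 = 1)
    (hP : ∀ i j, P i * P j = P (max i j)) (n : ℕ) :
    CompleteOrthogonalIdempotents
      (Fin.cons (P n) fun i : Fin n => P i - P (i + 1) : Fin (n + 1) → R) := by
  rw [CompleteOrthogonalIdempotents.iff_ortho_complete]
  refine ⟨fun k l hkl => ?_, ?_⟩
  · induction k using Fin.cases with
    | zero =>
      induction l using Fin.cases with
      | zero => exact absurd rfl hkl
      | succ j =>
        simp only [Fin.cons_zero, Fin.cons_succ, mul_sub, hP]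
        rw [max_eq_left j.isLt.le, max_eq_left j.isLt, sub_self]
    | succ i =>
      induction l using Fin.cases with
      | zero =>
        simp only [Fin.cons_zero, Fin.cons_succ, sub_mul, hP]
        rw [max_eq_right i.isLt.le, max_eq_right i.isLt, sub_self]
      | succ j =>
        simp only [Fin.cons_succ, mul_sub, sub_mul, hP]
        have hij : (i : ℕ) ≠ j := fun h => hkl (by rw [Fin.ext h])
        rcases hij.lt_or_gt with h | h
        · rw [max_eq_right h.le, max_eq_right h, max_eq_right (Nat.le_succ_of_le h.le),
            max_eq_right (Nat.succ_le_succ h.le), sub_self, sub_self, sub_self]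
        · rw [max_eq_left h.le, max_eq_left (Nat.le_succ_of_le h.le), max_eq_left h,
            max_eq_left (Nat.succ_le_succ h.le), sub_self]
  · rw [Fin.sum_univ_succ, Fin.cons_zero]
    simp only [Fin.cons_succ]
    rw [Fin.sum_univ_eq_sum_range (fun i => P i - P (i + 1)), Finset.sum_range_sub', h0]
    abel

theorem Polynomial.linearMap_ext_X_pow {R M : Type*} [CommSemiring R] [AddCommMonoid M]
    [Module R M] {f g : R[X] →ₗ[R] M} (h : ∀ n, f (X ^ n) = g (X ^ n)) : f = g :=
  (basisMonomials R).ext fun n => by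
    simpa [coe_basisMonomials, monomial_one_right_eq_X_pow] using h n

theorem Polynomial.derivative_pow_apply_X_pow {R : Type*} [CommSemiring R] (i m : ℕ) :
    (derivative ^ i : Module.End R R[X]) (X ^ m) = (m.descFactorial i : R) • X ^ (m - i) := by
  rw [Module.End.pow_apply, iterate_derivative_X_pow_eq_smul]

def Polynomial.IsIntegration {K : Type*} [Field K] (J : Module.End K K[X]) : Prop :=
  ∀ n : ℕ, J (X ^ n) = ((n : K) + 1)⁻¹ • X ^ (n + 1)

namespace Polynomial.IsIntegration

variable {K : Type*} [Field K] {J : Module.End K K[X]}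

theorem pow_apply_X_pow (hJ : IsIntegration J) (i k : ℕ) :
    (J ^ i) (X ^ k) = (((k + i).descFactorial i : ℕ) : K)⁻¹ • X ^ (k + i) := by
  induction i with
  | zero => simp
  | succ i ih =>
    rw [pow_succ', Module.End.mul_apply, ih, map_smul, hJ, smul_smul, ← add_assoc,
      Nat.succ_descFactorial_succ, Nat.cast_mul, mul_inv, mul_comm]
    push_cast
    rfl

variable [CharZero K]

theorem derivative_pow_mul_pow (hJ : IsIntegration J) (i : ℕ) :
    (derivative ^ i : Module.End K K[X]) * J ^ i = 1 := by
  refine linearMap_ext_X_pow fun k => ?_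
  have hne : (((k + i).descFactorial i : ℕ) : K) ≠ 0 :=
    Nat.cast_ne_zero.2 (Nat.descFactorial_eq_zero_iff_lt.not.2 (by omega))
  rw [Module.End.mul_apply, hJ.pow_apply_X_pow, map_smul, derivative_pow_apply_X_pow,
    Nat.add_sub_cancel, smul_smul, inv_mul_cancel₀ hne, one_smul, Module.End.one_apply]

theorem pow_mul_derivative_pow_apply_X_pow (hJ : IsIntegration J) (i m : ℕ) :
    (J ^ i * derivative ^ i : Module.End K K[X]) (X ^ m) = if i ≤ m then X ^ m else 0 := by
  rw [Module.End.mul_apply, derivative_pow_apply_X_pow, map_smul]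
  split_ifs with h
  · have hne : ((m.descFactorial i : ℕ) : K) ≠ 0 :=
      Nat.cast_ne_zero.2 (Nat.descFactorial_eq_zero_iff_lt.not.2 (by omega))
    rw [hJ.pow_apply_X_pow, Nat.sub_add_cancel h, smul_smul, mul_inv_cancel₀ hne, one_smul]
  · rw [Nat.descFactorial_eq_zero_iff_lt.2 (by omega), Nat.cast_zero, zero_smul]

theorem pow_mul_derivative_pow_mul (hJ : IsIntegration J) (i j : ℕ) :
    J ^ i * derivative ^ i * (J ^ j * derivative ^ j) = J ^ max i j * derivative ^ max i j := by
  refine linearMap_ext_X_pow fun m => ?_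
  rw [Module.End.mul_apply, hJ.pow_mul_derivative_pow_apply_X_pow j m,
    hJ.pow_mul_derivative_pow_apply_X_pow (max i j) m]
  by_cases hj : j ≤ m
  · rw [if_pos hj, hJ.pow_mul_derivative_pow_apply_X_pow i m]
    exact if_congr (by omega) rfl rfl
  · rw [if_neg hj, if_neg (by omega), map_zero]

end Polynomial.IsIntegration

theorem I1_decomposition_general (K : Type*) [Field K] [CharZero K]
    (D J Mx : Module.End K (Polynomial K))
    (hD : ∀ p : Polynomial K, D p = derivative p)
    (hJ : ∀ n : ℕ, J (X ^ n) = ((n : K) + 1)⁻¹ • X ^ (n + 1))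
    (e : ℕ → ℕ → Module.End K (Polynomial K))
    (he : ∀ i j, e i j = J ^ i * D ^ j - J ^ (i + 1) * D ^ (j + 1))
    (A : Subalgebra K (Module.End K (Polynomial K)))
    (hA : A = Algebra.adjoin K {Mx, D, J})
    (hDA : D ∈ A) (heA : ∀ i j, e i j ∈ A)
    (n : ℕ) :
    DirectSum.IsInternal (fun k : Fin (n + 1) =>
      Fin.cases (motive := fun _ => Submodule A A) (Submodule.span A {(⟨D, hDA⟩ : A) ^ n})
        (fun i : Fin n => Submodule.span A {(⟨e i i, heA i i⟩ : A)}) k) := by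
  obtain rfl : D = derivative := LinearMap.ext hD
  have hJA : J ∈ A := hA ▸ Algebra.subset_adjoin (by simp)
  let P : ℕ → A := fun i => ⟨J, hJA⟩ ^ i * ⟨derivative, hDA⟩ ^ i
  have hP : ∀ i j, P i * P j = P (max i j) := fun i j =>
    Subtype.ext (IsIntegration.pow_mul_derivative_pow_mul hJ i j)
  have heP : ∀ i, (⟨e i i, heA i i⟩ : A) = P i - P (i + 1) := fun i => Subtype.ext (he i i)
  have hDJ : (⟨derivative, hDA⟩ : A) ^ n * ⟨J, hJA⟩ ^ n = 1 :=
    Subtype.ext (IsIntegration.derivative_pow_mul_pow hJ n)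
  convert (completeOrthogonalIdempotents_cons_sub (P := P) (by simp only [P, pow_zero, mul_one])
    hP n).isInternal_span_singleton using 1
  funext k
  induction k using Fin.cases with
  | zero => exact Submodule.span_singleton_eq_span_singleton_mul_of_mul_eq_one hDJ
  | succ i => rw [Fin.cases_succ, Fin.cons_succ, heP]

/-- For `n ≥ 1`, the algebra `𝕀₁` of polynomial integro-differential operators decomposes as
a left `𝕀₁`-module as `𝕀₁ = 𝕀₁∂^n ⊕ 𝕀₁ e₀₀ ⊕ ⋯ ⊕ 𝕀₁ e_{n-1,n-1}`. -/
theorem I1_decomposition (K : Type*) [Field K] [CharZero K]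
    (D J Mx : Module.End K (Polynomial K))
    (hD : ∀ p : Polynomial K, D p = derivative p)
    (hJ : ∀ n : ℕ, J (X ^ n) = ((n : K) + 1)⁻¹ • X ^ (n + 1))
    (hMx : ∀ p : Polynomial K, Mx p = X * p)
    (e : ℕ → ℕ → Module.End K (Polynomial K))
    (he : ∀ i j, e i j = J ^ i * D ^ j - J ^ (i + 1) * D ^ (j + 1))
    (A : Subalgebra K (Module.End K (Polynomial K)))
    (hA : A = Algebra.adjoin K {Mx, D, J})
    (hDA : D ∈ A) (heA : ∀ i j, e i j ∈ A)
    (n : ℕ) (hn : 1 ≤ n) :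
    DirectSum.IsInternal (fun k : Fin (n + 1) =>
      Fin.cases (motive := fun _ => Submodule A A) (Submodule.span A {(⟨D, hDA⟩ : A) ^ n})
        (fun i : Fin n => Submodule.span A {(⟨e i i, heA i i⟩ : A)}) k) :=
  I1_decomposition_general K D J Mx hD hJ e he A hA hDA heA n
end

section
/- In the algebra 𝕀₁ of polynomial integro-differential operators, 𝕀₁ = 𝕀₁∂ ⊕ 𝕀₁e_{00} as left 𝕀₁-modules, where e_{00} = 1 − ∫∂. -/
open Polynomial

/-!
`∂∫ = 1`, so `e₀₀ = 1 - ∫∂` is an idempotent with `e₀₀ · ∫∂ = 0`. Since `∂ = ∂ · ∫∂`, the left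
ideal generated by `∂` is the one generated by the idempotent `∫∂`, whose complement is the left
ideal generated by `1 - ∫∂`.
-/

theorem isCompl_span_singleton_of_mul_eq_one {R : Type*} [Ring R] {d j : R} (h : d * j = 1) :
    IsCompl (Submodule.span R {d}) (Submodule.span R {1 - j * d}) := by
  have hd : d * (j * d) = d := by rw [← mul_assoc, h, one_mul]
  have he : (1 - j * d) * (j * d) = 0 := by rw [sub_mul, one_mul, mul_assoc, hd, sub_self]
  constructor
  · rw [Submodule.disjoint_def]
    intro x hx hx'
    obtain ⟨b, rfl⟩ := Submodule.mem_span_singleton.mp hx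
    obtain ⟨c, hc⟩ := Submodule.mem_span_singleton.mp hx'
    calc b • d = b • d * (j * d) := by rw [smul_eq_mul, mul_assoc, hd]
      _ = c • (1 - j * d) * (j * d) := by rw [hc]
      _ = 0 := by rw [smul_eq_mul, mul_assoc, he, mul_zero]
  · rw [codisjoint_iff, eq_top_iff]
    intro x _
    refine Submodule.mem_sup.mpr ⟨(x * j) • d, Submodule.mem_span_singleton.mpr ⟨x * j, rfl⟩,
      x • (1 - j * d), Submodule.mem_span_singleton.mpr ⟨x, rfl⟩, ?_⟩
    rw [smul_eq_mul, smul_eq_mul, mul_assoc, mul_sub, mul_one, add_sub_cancel]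

theorem derivative_comp_eq_self_of_apply_X_pow {K : Type*} [Field K] [CharZero K]
    (J : Module.End K K[X]) (hJ : ∀ n : ℕ, J (X ^ n) = ((n : K) + 1)⁻¹ • X ^ (n + 1))
    (p : K[X]) : derivative (J p) = p := by
  induction p using Polynomial.induction_on' with
  | add p q hp hq => rw [map_add, map_add, hp, hq]
  | monomial n a =>
    have hn : ((n : K) + 1) ≠ 0 := Nat.cast_add_one_ne_zero n
    rw [← smul_X_eq_monomial, map_smul, map_smul, hJ, map_smul, derivative_X_pow, smul_smul,
      Nat.cast_add_one, add_tsub_cancel_right, smul_eq_C_mul, ← mul_assoc, ← C_mul, mul_assoc,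
      inv_mul_cancel₀ hn, mul_one, ← smul_eq_C_mul]

theorem I1_eq_Dd_plus_e00_general (K : Type*) [Field K] [CharZero K]
    (D J Mx : Module.End K (Polynomial K))
    (hD : ∀ p : Polynomial K, D p = derivative p)
    (hJ : ∀ n : ℕ, J (X ^ n) = ((n : K) + 1)⁻¹ • X ^ (n + 1))
    (A : Subalgebra K (Module.End K (Polynomial K)))
    (hA : A = Algebra.adjoin K {Mx, D, J})
    (hDA : D ∈ A) (he00A : 1 - J * D ∈ A) :
    IsCompl (Submodule.span A {(⟨D, hDA⟩ : A)})
      (Submodule.span A {(⟨1 - J * D, he00A⟩ : A)}) := by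
  have hDJ : D * J = 1 :=
    LinearMap.ext fun p => (hD (J p)).trans (derivative_comp_eq_self_of_apply_X_pow J hJ p)
  have hJA : J ∈ A := hA ▸ Algebra.subset_adjoin (by simp)
  exact isCompl_span_singleton_of_mul_eq_one (j := (⟨J, hJA⟩ : A)) (Subtype.ext hDJ)

/-- In the algebra `𝕀₁` of polynomial integro-differential operators,
`𝕀₁ = 𝕀₁∂ ⊕ 𝕀₁ e₀₀` as left `𝕀₁`-modules, where `e₀₀ = 1 - ∫∂`. -/
theorem I1_eq_Dd_plus_e00 (K : Type*) [Field K] [CharZero K]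
    (D J Mx : Module.End K (Polynomial K))
    (hD : ∀ p : Polynomial K, D p = derivative p)
    (hJ : ∀ n : ℕ, J (X ^ n) = ((n : K) + 1)⁻¹ • X ^ (n + 1))
    (hMx : ∀ p : Polynomial K, Mx p = X * p)
    (A : Subalgebra K (Module.End K (Polynomial K)))
    (hA : A = Algebra.adjoin K {Mx, D, J})
    (hDA : D ∈ A) (he00A : 1 - J * D ∈ A) :
    IsCompl (Submodule.span A {(⟨D, hDA⟩ : A)})
      (Submodule.span A {(⟨1 - J * D, he00A⟩ : A)}) :=
  I1_eq_Dd_plus_e00_general K D J Mx hD hJ A hA hDA he00A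
end

section
/- The left 𝕀₁-module K[x] (with 𝕀₁ acting by evaluation of operators) is a projective 𝕀₁-module. -/
/-!
`K[x]` is a direct summand of `𝕀₁`. Since `∫ ∘ ∂ = 1 - ev₀`, the algebra `𝕀₁` contains the
projection `1 - ∫∂ : q ↦ q(0)`, hence every rank-one operator `q ↦ q(0) p = p(x) ∘ (1 - ∫∂)`.
Then `p ↦ p(x) ∘ (1 - ∫∂)` is an `𝕀₁`-linear section of the surjection `𝕀₁ → K[x]`, `a ↦ a 1`.
-/

open Polynomial

set_option synthInstance.maxHeartbeats 1000000
set_option maxHeartbeats 2000000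

/-- The tautological module structure of a subalgebra `A ⊆ End_K(K[x])` on `K[x]`:
an operator `a ∈ A` acts on a polynomial by evaluation. -/
noncomputable def tautModule (K : Type*) [Field K]
    (A : Subalgebra K (Module.End K (Polynomial K))) : Module A (Polynomial K) :=
  Module.compHom (Polynomial K) (A.val.toRingHom)

theorem Module.Projective.of_smulRight_mem {R V : Type*} [CommSemiring R] [AddCommMonoid V]
    [Module R V] (A : Subalgebra R (Module.End R V)) (φ : V →ₗ[R] R) (v : V) (hv : φ v = 1)
    (hmem : ∀ p : V, φ.smulRight p ∈ A) :
    letI := Module.compHom V A.val.toRingHom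
    Module.Projective A V := by
  let _ := Module.compHom V A.val.toRingHom
  let g : V →ₗ[A] A :=
    { toFun := fun p => ⟨φ.smulRight p, hmem p⟩
      map_add' := fun p q => Subtype.ext <| LinearMap.ext fun w => smul_add (φ w) p q
      map_smul' := fun a p => Subtype.ext <| LinearMap.ext fun w =>
        ((a : Module.End R V).map_smul (φ w) p).symm }
  refine Module.Projective.of_split g (LinearMap.toSpanSingleton A V v) ?_
  ext p
  show φ v • p = p
  rw [hv, one_smul]

theorem Polynomial.apply_derivative_eq_sub_C_coeff_zero {K : Type*} [Field K] [CharZero K]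
    (J : Module.End K K[X]) (hJ : ∀ n : ℕ, J (X ^ n) = ((n : K) + 1)⁻¹ • X ^ (n + 1))
    (q : K[X]) : J (derivative q) = q - C (q.coeff 0) := by
  suffices J ∘ₗ derivative = LinearMap.id - (lcoeff K 0).smulRight 1 by
    simpa [← C_eq_algebraMap, Algebra.smul_def] using LinearMap.congr_fun this q
  refine (basisMonomials K).ext fun n => ?_
  cases n with
  | zero => simp
  | succ m =>
    have hm : (m : K) + 1 ≠ 0 := Nat.cast_add_one_ne_zero m
    simp only [coe_basisMonomials, ← X_pow_eq_monomial, LinearMap.comp_apply,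
      derivative_X_pow_succ, ← smul_eq_C_mul, map_smul, hJ, smul_smul]
    simp [hm]

/-- The left `𝕀₁`-module `K[x]` (with `𝕀₁` acting by evaluation of operators) is projective. -/
theorem polynomial_projective_over_I1 (K : Type*) [Field K] [CharZero K]
    (D J Mx : Module.End K (Polynomial K))
    (hD : ∀ p : Polynomial K, D p = derivative p)
    (hJ : ∀ n : ℕ, J (X ^ n) = ((n : K) + 1)⁻¹ • X ^ (n + 1))
    (hMx : ∀ p : Polynomial K, Mx p = X * p)
    (A : Subalgebra K (Module.End K (Polynomial K)))
    (hA : A = Algebra.adjoin K {Mx, D, J}) :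
    letI := tautModule K A
    Module.Projective A (Polynomial K) := by
  have hgen : {Mx, D, J} ⊆ (A : Set (Module.End K K[X])) := hA ▸ Algebra.subset_adjoin
  refine Module.Projective.of_smulRight_mem A (lcoeff K 0) 1 coeff_one_zero fun p => ?_
  have haeval : aeval Mx p = Algebra.lmul K K[X] p := by
    rw [show Mx = Algebra.lmul K K[X] X from LinearMap.ext hMx, aeval_algHom_apply,
      aeval_X_left_apply]
  have hfactor : (lcoeff K 0).smulRight p = aeval Mx p * (1 - J * D) := by
    ext q
    simp [haeval, Algebra.coe_lmul_eq_mul, hD, apply_derivative_eq_sub_C_coeff_zero J hJ,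
      smul_eq_C_mul, mul_comm]
  rw [hfactor]
  refine A.mul_mem ?_ (A.sub_mem A.one_mem (A.mul_mem (hgen (by simp)) (hgen (by simp))))
  exact Algebra.adjoin_le (Set.singleton_subset_iff.2 (hgen (by simp)))
    (aeval_mem_adjoin_singleton K Mx)
end

section
/- Let e_{00} = 1 − ∫∂ in 𝕀₁. Then the left ideal 𝕀₁e_{00} is isomorphic as a left 𝕀₁-module to K[x] (with the tautological action), via the map sending a·e_{00} to a(1) ∈ K[x]. In particular, K[x] ≅ 𝕀₁/𝕀₁∂ as left 𝕀₁-modules. -/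
open Polynomial

/-!
On polynomials `∫` inverts `∂` away from the constants, so `e₀₀ = 1 - ∫∂` is the projection
`p ↦ p(0)`. Hence `e₀₀` fixes `1`, and `a e₀₀ = 0` as soon as `a(1) = 0`. Since `1` generates
`K[x]` under multiplication by `x`, the map `a e₀₀ ↦ a(1)` is an isomorphism `𝕀₁ e₀₀ ≃ K[x]`,
and the annihilator of `1` is `𝕀₁ ∂`: if `a(1) = 0` then `a = a ∫ ∂`.
-/

section CyclicModule

open LinearMap Submodule

variable {R M : Type*} [Ring R] [AddCommGroup M] [Module R M] {m : M}

theorem injective_toSpanSingleton_comp_subtype {e : R} (hem : e • m = m)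
    (hann : ∀ a ∈ ker (toSpanSingleton R M m), a * e = 0) :
    Function.Injective ((toSpanSingleton R M m).comp (span R {e}).subtype) := by
  refine (injective_iff_map_eq_zero _).2 fun ⟨v, hv⟩ hv0 => ?_
  obtain ⟨c, rfl⟩ := mem_span_singleton.1 hv
  have hcm : c • m = 0 := by simpa [mul_smul, hem] using hv0
  simpa using hann c hcm

theorem surjective_toSpanSingleton_comp_subtype {e : R} (hem : e • m = m)
    (hm : Function.Surjective (toSpanSingleton R M m)) :
    Function.Surjective ((toSpanSingleton R M m).comp (span R {e}).subtype) := by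
  intro x
  obtain ⟨a, rfl⟩ := hm x
  refine ⟨⟨a • e, smul_mem _ a (mem_span_singleton_self e)⟩, ?_⟩
  simp [mul_smul, hem]

/-- The isomorphism `v ↦ v • m` from the left ideal `R e` onto the cyclic module `M = R m`. -/
noncomputable def spanSingletonEquivOfCyclic (e : R) (hem : e • m = m)
    (hann : ∀ a ∈ ker (toSpanSingleton R M m), a * e = 0)
    (hm : Function.Surjective (toSpanSingleton R M m)) :
    span R {e} ≃ₗ[R] M :=
  .ofBijective _ ⟨injective_toSpanSingleton_comp_subtype hem hann,
    surjective_toSpanSingleton_comp_subtype hem hm⟩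

theorem ker_toSpanSingleton_eq_span_singleton {d j : R} (hd : d ∈ ker (toSpanSingleton R M m))
    (hann : ∀ a ∈ ker (toSpanSingleton R M m), a * (1 - j * d) = 0) :
    ker (toSpanSingleton R M m) = span R {d} := by
  refine le_antisymm (fun a ha => mem_span_singleton.2 ⟨a * j, ?_⟩)
    ((span_singleton_le_iff_mem _ _).2 hd)
  have had := hann a ha
  rw [mul_sub, mul_one, sub_eq_zero] at had
  rw [smul_eq_mul, mul_assoc, ← had]

end CyclicModule

namespace Polynomial

variable {K : Type*} [Field K]

theorem one_sub_mul_derivative_apply [CharZero K] {J : Module.End K K[X]}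
    (hJ : ∀ n : ℕ, J (X ^ n) = ((n : K) + 1)⁻¹ • X ^ (n + 1)) (p : K[X]) :
    (1 - J * derivative : Module.End K K[X]) p = C (p.coeff 0) := by
  induction p using Polynomial.induction_on' with
  | add p q hp hq => rw [map_add, hp, hq, coeff_add, C_add]
  | monomial n a =>
    rw [← C_mul_X_pow_eq_monomial, ← smul_eq_C_mul, map_smul, coeff_smul, smul_eq_mul, C_mul,
      ← smul_eq_C_mul]
    congr 1
    cases n with
    | zero => simp
    | succ n =>
      have hn : ((n : K) + 1) ≠ 0 := Nat.cast_add_one_ne_zero n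
      have hJD : J (derivative (X ^ (n + 1))) = X ^ (n + 1) := by
        rw [derivative_X_pow, Nat.cast_add_one, add_tsub_cancel_right, ← smul_eq_C_mul, map_smul,
          hJ, smul_smul, mul_inv_cancel₀ hn, one_smul]
      rw [LinearMap.sub_apply, Module.End.one_apply, Module.End.mul_apply, hJD, sub_self,
        coeff_X_pow, if_neg (Nat.zero_ne_add_one n), C_0]

theorem mul_one_sub_mul_derivative_eq_zero [CharZero K] {J a : Module.End K K[X]}
    (hJ : ∀ n : ℕ, J (X ^ n) = ((n : K) + 1)⁻¹ • X ^ (n + 1)) (ha : a 1 = 0) :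
    a * (1 - J * derivative) = 0 := by
  refine LinearMap.ext fun p => ?_
  rw [Module.End.mul_apply, one_sub_mul_derivative_apply hJ, ← mul_one (C _), ← smul_eq_C_mul,
    map_smul, ha, smul_zero, LinearMap.zero_apply]

theorem aeval_mulLeft_X_apply_one (p : K[X]) :
    aeval (LinearMap.mulLeft K (X : K[X])) p 1 = p := by
  have hX : LinearMap.mulLeft K (X : K[X]) = Algebra.lmul K K[X] X := rfl
  rw [hX, aeval_algHom_apply, aeval_X_left_apply, Algebra.coe_lmul_eq_mul, LinearMap.mul_apply',
    mul_one]

end Polynomial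

/-- The left ideal `𝕀₁ e₀₀` (with `e₀₀ = 1 - ∫∂`) is isomorphic as a left `𝕀₁`-module to
`K[x]` via `a e₀₀ ↦ a(1)`; in particular `K[x] ≅ 𝕀₁/𝕀₁∂` as left `𝕀₁`-modules. -/
theorem I1_e00_iso_polynomial (K : Type*) [Field K] [CharZero K]
    (D J Mx : Module.End K (Polynomial K))
    (hD : ∀ p : Polynomial K, D p = derivative p)
    (hJ : ∀ n : ℕ, J (X ^ n) = ((n : K) + 1)⁻¹ • X ^ (n + 1))
    (hMx : ∀ p : Polynomial K, Mx p = X * p)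
    (A : Subalgebra K (Module.End K (Polynomial K)))
    (hA : A = Algebra.adjoin K {Mx, D, J})
    (hDA : D ∈ A) (he00A : 1 - J * D ∈ A) :
    letI := tautModule K A
    (∃ f : (Submodule.span A {(⟨1 - J * D, he00A⟩ : A)}) ≃ₗ[A] Polynomial K,
        ∀ v : Submodule.span A {(⟨1 - J * D, he00A⟩ : A)},
          f v = ((v : A) : Module.End K (Polynomial K)) 1) ∧
    (∃ g : A →ₗ[A] Polynomial K, Function.Surjective g ∧
        LinearMap.ker g = Submodule.span A {(⟨D, hDA⟩ : A)}) := by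
  let := tautModule K A
  obtain rfl : D = derivative := LinearMap.ext hD
  obtain rfl : Mx = LinearMap.mulLeft K X := LinearMap.ext hMx
  have hMxA : LinearMap.mulLeft K X ∈ A := hA ▸ Algebra.subset_adjoin (by simp)
  have hJA : J ∈ A := hA ▸ Algebra.subset_adjoin (by simp)
  have hann : ∀ a ∈ LinearMap.ker (LinearMap.toSpanSingleton A K[X] 1),
      a * (1 - ⟨J, hJA⟩ * ⟨derivative, hDA⟩) = 0 :=
    fun a ha => Subtype.ext (mul_one_sub_mul_derivative_eq_zero hJ (LinearMap.mem_ker.1 ha))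
  have hgen : Function.Surjective (LinearMap.toSpanSingleton A K[X] 1) := fun p =>
    ⟨aeval ⟨_, hMxA⟩ p, (LinearMap.congr_fun (aeval_subalgebra_coe p A _) 1).trans
      (aeval_mulLeft_X_apply_one p)⟩
  have hfix : LinearMap.toSpanSingleton A K[X] 1 ⟨1 - J * derivative, he00A⟩ = 1 := by
    show (1 - J * derivative : Module.End K K[X]) 1 = 1
    rw [one_sub_mul_derivative_apply hJ, coeff_one_zero, C_1]
  have hd : (⟨derivative, hDA⟩ : A) ∈ LinearMap.ker (LinearMap.toSpanSingleton A K[X] 1) :=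
    derivative_one (R := K)
  -- Naming `R` and `m` spares the unifier a very slow search through the module instances on `A`.
  exact ⟨⟨spanSingletonEquivOfCyclic (R := A) (m := (1 : K[X])) _ hfix hann hgen, fun v => rfl⟩,
    LinearMap.toSpanSingleton A K[X] 1, hgen,
    ker_toSpanSingleton_eq_span_singleton (R := A) (m := (1 : K[X])) hd hann⟩
end

section
/- In End_K(K[x]), with F := span_K{e_{ij} : i,j ∈ ℕ}, F is a two-sided ideal of the algebra 𝕀₁ and F² = F. -/
/-!
Write `J = ∫` and `D = ∂`; the elements `e i j = J^i D^j - J^(i+1) D^(j+1)` behave like matrix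
units. Only two identities of `𝕀₁` are needed: `D J = 1`, and integration by parts
`x = J x D + J`. The first makes left multiplication by `J` and `D` shift the first index of `e i j`
up and down (with `D e 0 j = 0`), and right multiplication by `D` and `J` shift the second (with
`e i 0 J = 0`); the second reduces multiplication by `x` to these shifts:
`x e i j = (i + 1) e (i + 1) j` and `e i (j + 1) x = (j + 1) e i j`. So `F` is stable under the
generators on both sides, hence an ideal, and `F² = F` because `e i j = e i 0 * e 0 j`.
-/

open Polynomial

namespace IntegroDifferential

section MatrixUnit

variable {R : Type*} [Ring R]

def matrixUnit (J D : R) (i j : ℕ) : R :=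
  J ^ i * D ^ j - J ^ (i + 1) * D ^ (j + 1)

variable {J D x : R}

theorem J_mul_matrixUnit (i j : ℕ) : J * matrixUnit J D i j = matrixUnit J D (i + 1) j := by
  simp only [matrixUnit, mul_sub, ← mul_assoc, ← pow_succ']

theorem matrixUnit_mul_D (i j : ℕ) : matrixUnit J D i j * D = matrixUnit J D i (j + 1) := by
  simp only [matrixUnit, sub_mul, mul_assoc, ← pow_succ]

theorem matrixUnit_zero_left (j : ℕ) : matrixUnit J D 0 j = D ^ j - J * D ^ (j + 1) := by
  rw [matrixUnit, pow_zero, one_mul, pow_one]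

theorem matrixUnit_mul_D_pow (i j : ℕ) : matrixUnit J D i 0 * D ^ j = matrixUnit J D i j := by
  induction j with
  | zero => rw [pow_zero, mul_one]
  | succ j ih => rw [pow_succ, ← mul_assoc, ih, matrixUnit_mul_D]

variable (hDJ : D * J = 1)
include hDJ

theorem D_mul_matrixUnit_zero (j : ℕ) : D * matrixUnit J D 0 j = 0 := by
  rw [matrixUnit_zero_left, mul_sub, ← pow_succ', ← mul_assoc, hDJ, one_mul, sub_self]

theorem D_mul_matrixUnit_succ (i j : ℕ) : D * matrixUnit J D (i + 1) j = matrixUnit J D i j := by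
  have h (k : ℕ) : D * J ^ (k + 1) = J ^ k := by rw [pow_succ', ← mul_assoc, hDJ, one_mul]
  rw [matrixUnit, matrixUnit, mul_sub, ← mul_assoc, ← mul_assoc, h, h]

theorem matrixUnit_zero_mul_J (i : ℕ) : matrixUnit J D i 0 * J = 0 := by
  rw [matrixUnit, pow_zero, mul_one, pow_one, sub_mul, mul_assoc, hDJ, mul_one, ← pow_succ,
    sub_self]

theorem matrixUnit_succ_mul_J (i j : ℕ) : matrixUnit J D i (j + 1) * J = matrixUnit J D i j := by
  have h (k : ℕ) : D ^ (k + 1) * J = D ^ k := by rw [pow_succ, mul_assoc, hDJ, mul_one]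
  rw [matrixUnit, matrixUnit, sub_mul, mul_assoc, mul_assoc, h, h]

theorem matrixUnit_zero_mul_matrixUnit (i j : ℕ) :
    matrixUnit J D i 0 * matrixUnit J D 0 j = matrixUnit J D i j := by
  rw [matrixUnit_zero_left, mul_sub, matrixUnit_mul_D_pow,
    ← mul_assoc, matrixUnit_zero_mul_J hDJ, zero_mul, sub_zero]

variable (hx : x = J * x * D + J)
include hx

theorem x_mul_matrixUnit (i j : ℕ) :
    x * matrixUnit J D i j = (i + 1) • matrixUnit J D (i + 1) j := by
  induction i with
  | zero =>
    rw [hx, add_mul, mul_assoc, mul_assoc, D_mul_matrixUnit_zero hDJ, mul_zero, mul_zero,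
      zero_add, J_mul_matrixUnit, zero_add, one_smul]
  | succ i ih =>
    rw [hx, add_mul, mul_assoc, mul_assoc, D_mul_matrixUnit_succ hDJ, ih, mul_smul_comm,
      J_mul_matrixUnit, ← succ_nsmul]

theorem matrixUnit_zero_mul_x (i : ℕ) : matrixUnit J D i 0 * x = 0 := by
  rw [hx, mul_add, ← mul_assoc, ← mul_assoc, matrixUnit_zero_mul_J hDJ, zero_mul, zero_mul,
    add_zero]

theorem matrixUnit_succ_mul_x (i j : ℕ) :
    matrixUnit J D i (j + 1) * x = (j + 1) • matrixUnit J D i j := by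
  induction j with
  | zero =>
    rw [hx, mul_add, ← mul_assoc, ← mul_assoc, matrixUnit_succ_mul_J hDJ,
      matrixUnit_zero_mul_x hDJ hx, zero_mul, zero_add, zero_add, one_smul]
  | succ j ih =>
    rw [hx, mul_add, ← mul_assoc, ← mul_assoc, matrixUnit_succ_mul_J hDJ, ih,
      smul_mul_assoc, matrixUnit_mul_D, ← succ_nsmul]

end MatrixUnit

section Adjoin

variable {K R : Type*} [CommSemiring K] [Semiring R] [Algebra K R]

theorem forall_mul_mem_of_mem_adjoin {s : Set R} {F : Submodule K R}
    (hs : ∀ g ∈ s, ∀ f ∈ F, g * f ∈ F ∧ f * g ∈ F) {a : R} (ha : a ∈ Algebra.adjoin K s) :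
    ∀ f ∈ F, a * f ∈ F ∧ f * a ∈ F := by
  induction ha using Algebra.adjoin_induction with
  | mem g hg => exact hs g hg
  | algebraMap r =>
    intro f hf
    rw [← Algebra.commutes, ← Algebra.smul_def]
    exact ⟨F.smul_mem r hf, F.smul_mem r hf⟩
  | add a b _ _ ha hb =>
    intro f hf
    rw [add_mul, mul_add]
    exact ⟨F.add_mem (ha f hf).1 (hb f hf).1, F.add_mem (ha f hf).2 (hb f hf).2⟩
  | mul a b _ _ ha hb =>
    intro f hf
    rw [mul_assoc, ← mul_assoc f]
    exact ⟨(ha _ (hb f hf).1).1, (hb _ (ha f hf).2).2⟩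

end Adjoin

section MatrixUnitSpan

variable (K : Type*) {R : Type*} [CommRing K] [Ring R] [Algebra K R]

def matrixUnitSpan (J D : R) : Submodule K R :=
  Submodule.span K {f | ∃ i j, f = matrixUnit J D i j}

variable {K} {J D x : R}

theorem matrixUnit_mem_matrixUnitSpan (i j : ℕ) : matrixUnit J D i j ∈ matrixUnitSpan K J D :=
  Submodule.subset_span ⟨i, j, rfl⟩

theorem matrixUnitSpan_le {A : Subalgebra K R} (hJ : J ∈ A) (hD : D ∈ A) :
    matrixUnitSpan K J D ≤ Subalgebra.toSubmodule A :=
  Submodule.span_le.2 <| by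
    rintro _ ⟨i, j, rfl⟩
    rw [SetLike.mem_coe, Subalgebra.mem_toSubmodule]
    exact sub_mem (mul_mem (pow_mem hJ i) (pow_mem hD j))
      (mul_mem (pow_mem hJ (i + 1)) (pow_mem hD (j + 1)))

theorem forall_mul_mem_matrixUnitSpan {g : R}
    (h : ∀ i j, g * matrixUnit J D i j ∈ matrixUnitSpan K J D ∧
      matrixUnit J D i j * g ∈ matrixUnitSpan K J D) :
    ∀ f ∈ matrixUnitSpan K J D, g * f ∈ matrixUnitSpan K J D ∧ f * g ∈ matrixUnitSpan K J D := by
  have hl : matrixUnitSpan K J D ≤ (matrixUnitSpan K J D).comap (LinearMap.mulLeft K g) :=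
    Submodule.span_le.2 <| by rintro _ ⟨i, j, rfl⟩; exact (h i j).1
  have hr : matrixUnitSpan K J D ≤ (matrixUnitSpan K J D).comap (LinearMap.mulRight K g) :=
    Submodule.span_le.2 <| by rintro _ ⟨i, j, rfl⟩; exact (h i j).2
  exact fun f hf => ⟨hl hf, hr hf⟩

variable (hDJ : D * J = 1)
include hDJ

theorem forall_J_mul_mem_matrixUnitSpan :
    ∀ f ∈ matrixUnitSpan K J D, J * f ∈ matrixUnitSpan K J D ∧ f * J ∈ matrixUnitSpan K J D := by
  refine forall_mul_mem_matrixUnitSpan fun i j => ⟨?_, ?_⟩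
  · rw [J_mul_matrixUnit]
    exact matrixUnit_mem_matrixUnitSpan _ _
  · cases j with
    | zero => rw [matrixUnit_zero_mul_J hDJ]; exact zero_mem _
    | succ j => rw [matrixUnit_succ_mul_J hDJ]; exact matrixUnit_mem_matrixUnitSpan _ _

theorem forall_D_mul_mem_matrixUnitSpan :
    ∀ f ∈ matrixUnitSpan K J D, D * f ∈ matrixUnitSpan K J D ∧ f * D ∈ matrixUnitSpan K J D := by
  refine forall_mul_mem_matrixUnitSpan fun i j => ⟨?_, ?_⟩
  · cases i with
    | zero => rw [D_mul_matrixUnit_zero hDJ]; exact zero_mem _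
    | succ i => rw [D_mul_matrixUnit_succ hDJ]; exact matrixUnit_mem_matrixUnitSpan _ _
  · rw [matrixUnit_mul_D]
    exact matrixUnit_mem_matrixUnitSpan _ _

theorem forall_x_mul_mem_matrixUnitSpan (hx : x = J * x * D + J) :
    ∀ f ∈ matrixUnitSpan K J D, x * f ∈ matrixUnitSpan K J D ∧ f * x ∈ matrixUnitSpan K J D := by
  refine forall_mul_mem_matrixUnitSpan fun i j => ⟨?_, ?_⟩
  · rw [x_mul_matrixUnit hDJ hx]
    exact nsmul_mem (matrixUnit_mem_matrixUnitSpan _ _) _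
  · cases j with
    | zero => rw [matrixUnit_zero_mul_x hDJ hx]; exact zero_mem _
    | succ j =>
      rw [matrixUnit_succ_mul_x hDJ hx]
      exact nsmul_mem (matrixUnit_mem_matrixUnitSpan _ _) _

theorem matrixUnitSpan_mul_self :
    matrixUnitSpan K J D * matrixUnitSpan K J D = matrixUnitSpan K J D := by
  refine le_antisymm (Submodule.mul_le.2 fun f hf g hg => ?_) (Submodule.span_le.2 ?_)
  · have hg : g ∈ Algebra.adjoin K {J, D} :=
      matrixUnitSpan_le (Algebra.subset_adjoin (by simp)) (Algebra.subset_adjoin (by simp)) hg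
    refine (forall_mul_mem_of_mem_adjoin ?_ hg f hf).2
    rintro _ (rfl | rfl)
    exacts [forall_J_mul_mem_matrixUnitSpan hDJ, forall_D_mul_mem_matrixUnitSpan hDJ]
  · rintro _ ⟨i, j, rfl⟩
    rw [← matrixUnit_zero_mul_matrixUnit hDJ]
    exact Submodule.mul_mem_mul (matrixUnit_mem_matrixUnitSpan _ _)
      (matrixUnit_mem_matrixUnitSpan _ _)

end MatrixUnitSpan

section Polynomial

variable {K : Type*} [Field K] {D J Mx : Module.End K K[X]}

theorem lhom_ext_X_pow {R M : Type*} [CommSemiring R] [AddCommMonoid M] [Module R M]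
    {f g : R[X] →ₗ[R] M} (h : ∀ n : ℕ, f (X ^ n) = g (X ^ n)) : f = g :=
  (basisMonomials R).ext fun n => by
    simpa only [coe_basisMonomials, monomial_one_right_eq_X_pow] using h n

variable [CharZero K] (hJ : ∀ n : ℕ, J (X ^ n) = ((n : K) + 1)⁻¹ • X ^ (n + 1))
include hJ

theorem D_mul_J_eq_one (hD : ∀ p : K[X], D p = derivative p) : D * J = 1 := by
  refine lhom_ext_X_pow fun n => ?_
  rw [Module.End.mul_apply, hJ, map_smul, hD, derivative_X_pow, Module.End.one_apply,
    add_tsub_cancel_right, ← smul_eq_C_mul, smul_smul, Nat.cast_add_one,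
    inv_mul_cancel₀ (Nat.cast_add_one_ne_zero n), one_smul]

theorem mulX_eq_J_mul_mulX_mul_D_add_J (hD : ∀ p : K[X], D p = derivative p)
    (hMx : ∀ p : K[X], Mx p = X * p) : Mx = J * Mx * D + J := by
  have hMxD (n : ℕ) : Mx (D (X ^ n)) = (n : K) • X ^ n := by
    cases n with
    | zero => simp [hD]
    | succ n => rw [hD, hMx, derivative_X_pow, add_tsub_cancel_right, smul_eq_C_mul]; ring
  refine lhom_ext_X_pow fun n => ?_
  rw [LinearMap.add_apply, Module.End.mul_apply, Module.End.mul_apply, hMxD, map_smul, hJ, hMx,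
    smul_smul, ← add_smul, ← pow_succ']
  have hn : (n : K) + 1 ≠ 0 := Nat.cast_add_one_ne_zero n
  field_simp
  simp

end Polynomial

end IntegroDifferential

open IntegroDifferential

/-- `F = span_K {e i j}` is a two-sided ideal of `𝕀₁` and `F² = F`. -/
theorem F_ideal_idempotent (K : Type*) [Field K] [CharZero K]
    (D J Mx : Module.End K (Polynomial K))
    (hD : ∀ p : Polynomial K, D p = derivative p)
    (hJ : ∀ n : ℕ, J (X ^ n) = ((n : K) + 1)⁻¹ • X ^ (n + 1))
    (hMx : ∀ p : Polynomial K, Mx p = X * p)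
    (e : ℕ → ℕ → Module.End K (Polynomial K))
    (he : ∀ i j, e i j = J ^ i * D ^ j - J ^ (i + 1) * D ^ (j + 1))
    (A : Subalgebra K (Module.End K (Polynomial K)))
    (hA : A = Algebra.adjoin K {Mx, D, J})
    (F : Submodule K (Module.End K (Polynomial K)))
    (hF : F = Submodule.span K {f | ∃ i j, f = e i j}) :
    (∀ f ∈ F, f ∈ A) ∧
    (∀ a ∈ A, ∀ f ∈ F, a * f ∈ F ∧ f * a ∈ F) ∧
    F * F = F := by
  obtain rfl : e = matrixUnit J D := funext₂ he
  obtain rfl : F = matrixUnitSpan K J D := hF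
  have hDJ := D_mul_J_eq_one hJ hD
  have hMx := mulX_eq_J_mul_mulX_mul_D_add_J hJ hD hMx
  subst hA
  refine ⟨fun f hf => matrixUnitSpan_le (Algebra.subset_adjoin (by simp))
    (Algebra.subset_adjoin (by simp)) hf, fun a ha => forall_mul_mem_of_mem_adjoin ?_ ha,
    matrixUnitSpan_mul_self hDJ⟩
  rintro _ (rfl | rfl | rfl)
  exacts [forall_x_mul_mem_matrixUnitSpan hDJ hMx, forall_D_mul_mem_matrixUnitSpan hDJ,
    forall_J_mul_mem_matrixUnitSpan hDJ]
end

section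
/- Let α(H) ∈ K[H] be a nonzero polynomial evaluated at H = ∂x in 𝕀₁. Then the set {a ∈ 𝕀₁ : a·α(H) = 0} (the left annihilator of α(H) in 𝕀₁) is contained in F = span_K{e_{ij}}; more precisely, it equals ⊕_{i: α(i+1)=0} ⊕_{j∈ℕ} K e_{ji}. -/
open Polynomial
open scoped Nat

/-!
`H = ∂x` is diagonal on monomials, `H Xⁿ = (n + 1) Xⁿ`, so `a · α(H) = 0` exactly when `a` kills
every `Xⁿ` with `α(n + 1) ≠ 0`, i.e. all monomials outside a finite set of degrees. On the other
hand `e j i = (i!/j!) · (Xⁱ ↦ Xʲ)` is a nonzero multiple of a matrix unit, and a map killing all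
monomials outside a finite set of degrees is a finite combination of matrix units. As every
`e j i` lies in `𝕀₁`, the annihilator is exactly the span of the `e j i` with `α(i + 1) = 0`.
-/

namespace Polynomial

theorem linearMap_ext_X_pow_s17 {R M : Type*} [CommSemiring R] [AddCommMonoid M] [Module R M]
    {f g : R[X] →ₗ[R] M} (h : ∀ n : ℕ, f (X ^ n) = g (X ^ n)) : f = g :=
  lhom_ext' fun n => LinearMap.ext fun c => by
    rw [LinearMap.comp_apply, LinearMap.comp_apply, ← smul_X_eq_monomial, map_smul, map_smul, h]

variable {K : Type*} [Field K]

theorem derivative_pow_apply_X_pow_s17 (j n : ℕ) :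
    (derivative ^ j : Module.End K K[X]) (X ^ n) = (n.descFactorial j : K) • X ^ (n - j) := by
  rw [Module.End.pow_apply]
  exact iterate_derivative_X_pow_eq_smul n j

theorem mul_derivative_pow_apply_X_pow_of_lt (g : Module.End K K[X]) {j n : ℕ} (hnj : n < j) :
    (g * derivative ^ j : Module.End K K[X]) (X ^ n) = 0 := by
  rw [Module.End.mul_apply, derivative_pow_apply_X_pow_s17, Nat.descFactorial_eq_zero_iff_lt.2 hnj,
    Nat.cast_zero, zero_smul, map_zero]

theorem derivative_X_mul_X_pow (n : ℕ) :
    derivative (X * X ^ n : K[X]) = ((n : K) + 1) • X ^ n := by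
  rw [← pow_succ', derivative_X_pow, ← smul_eq_C_mul]
  push_cast
  rfl

theorem mul_aeval_eq_zero_iff {f : Module.End K K[X]} {μ : ℕ → K}
    (hf : ∀ n : ℕ, f (X ^ n) = μ n • X ^ n) (a : Module.End K K[X]) (p : K[X]) :
    a * aeval f p = 0 ↔ ∀ n : ℕ, p.eval (μ n) ≠ 0 → a (X ^ n) = 0 := by
  have haeval (n : ℕ) : aeval f p (X ^ n) = p.eval (μ n) • X ^ n :=
    Module.End.aeval_apply_of_hasEigenvector <| Module.End.hasEigenvector_iff.2
      ⟨Module.End.mem_eigenspace_iff.2 (hf n), pow_ne_zero _ X_ne_zero⟩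
  constructor
  · intro h n hn
    have han := LinearMap.congr_fun h (X ^ n)
    rw [Module.End.mul_apply, haeval, map_smul, LinearMap.zero_apply] at han
    exact (smul_eq_zero.1 han).resolve_left hn
  · intro h
    refine linearMap_ext_X_pow_s17 fun n => ?_
    rw [Module.End.mul_apply, haeval, map_smul, LinearMap.zero_apply]
    by_cases hn : p.eval (μ n) = 0
    · rw [hn, zero_smul]
    · rw [h n hn, smul_zero]

theorem smulRight_lcoeff_mem_span (i : ℕ) (p : K[X]) :
    (lcoeff K i).smulRight p ∈
      Submodule.span K {f | ∃ j : ℕ, f = (lcoeff K i).smulRight (X ^ j)} := by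
  rw [p.as_sum_support, ← LinearMap.smulRightₗ_apply, map_sum]
  refine Submodule.sum_mem _ fun m _ => ?_
  rw [← smul_X_eq_monomial, map_smul]
  exact Submodule.smul_mem _ _ (Submodule.subset_span ⟨m, rfl⟩)

theorem mem_span_smulRight_lcoeff_iff {S : Set ℕ} (hS : S.Finite) (a : Module.End K K[X]) :
    a ∈ Submodule.span K {f | ∃ i j : ℕ, i ∈ S ∧ f = (lcoeff K i).smulRight (X ^ j)} ↔
      ∀ n ∉ S, a (X ^ n) = 0 := by
  constructor
  · intro ha n hn
    induction ha using Submodule.span_induction with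
    | mem f hf =>
      obtain ⟨i, j, hi, rfl⟩ := hf
      simp [coeff_X_pow, show i ≠ n by rintro rfl; exact hn hi]
    | zero => rfl
    | add f g _ _ hf hg => rw [LinearMap.add_apply, hf, hg, add_zero]
    | smul c f _ hf => rw [LinearMap.smul_apply, hf, smul_zero]
  · intro ha
    have hsum : a = ∑ i ∈ hS.toFinset, (lcoeff K i).smulRight (a (X ^ i)) := by
      refine linearMap_ext_X_pow_s17 fun n => ?_
      simp only [LinearMap.sum_apply, LinearMap.smulRight_apply, lcoeff_apply, coeff_X_pow,
        ite_smul, one_smul, zero_smul, Finset.sum_ite_eq']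
      split_ifs with hn
      · rfl
      · exact ha n (mt hS.mem_toFinset.2 hn)
    rw [hsum]
    refine Submodule.sum_mem _ fun i hi => ?_
    refine Submodule.span_mono ?_ (smulRight_lcoeff_mem_span i (a (X ^ i)))
    rintro f ⟨j, rfl⟩
    exact ⟨i, j, hS.mem_toFinset.1 hi, rfl⟩

def IsIntegration_s17 (J : Module.End K K[X]) : Prop :=
  ∀ n : ℕ, J (X ^ n) = ((n : K) + 1)⁻¹ • X ^ (n + 1)

namespace IsIntegration_s17

variable [CharZero K] {J : Module.End K K[X]} (hJ : IsIntegration_s17 J)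
include hJ

theorem pow_apply_X_pow_s17 (i n : ℕ) :
    (J ^ i) (X ^ n) = ((n ! : K) / (n + i)!) • X ^ (n + i) := by
  induction i with
  | zero => simp [Nat.factorial_ne_zero]
  | succ i ih =>
    rw [pow_succ', Module.End.mul_apply, ih, map_smul, hJ, smul_smul, ← add_assoc,
      ← div_eq_mul_inv, div_div, Nat.factorial_succ]
    push_cast
    ring_nf

theorem pow_mul_derivative_pow_apply_X_pow_s17 {j n : ℕ} (hjn : j ≤ n) (i : ℕ) :
    (J ^ i * derivative ^ j : Module.End K K[X]) (X ^ n) =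
      ((n ! : K) / (n - j + i)!) • X ^ (n - j + i) := by
  rw [Module.End.mul_apply, derivative_pow_apply_X_pow_s17, map_smul, hJ.pow_apply_X_pow_s17, smul_smul,
    ← Nat.factorial_mul_descFactorial hjn, Nat.cast_mul, mul_div_assoc', mul_comm]

theorem pow_mul_derivative_pow_sub_eq (i j : ℕ) :
    J ^ i * derivative ^ j - J ^ (i + 1) * derivative ^ (j + 1) =
      ((j ! : K) / i !) • (lcoeff K j).smulRight (X ^ i) := by
  refine linearMap_ext_X_pow_s17 fun n => ?_
  simp only [LinearMap.sub_apply, LinearMap.smul_apply, LinearMap.smulRight_apply, lcoeff_apply,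
    coeff_X_pow]
  rcases lt_trichotomy n j with hnj | rfl | hjn
  · rw [mul_derivative_pow_apply_X_pow_of_lt (J ^ _) hnj,
      mul_derivative_pow_apply_X_pow_of_lt (J ^ _) (by omega), if_neg (by omega)]
    simp
  · rw [hJ.pow_mul_derivative_pow_apply_X_pow_s17 le_rfl,
      mul_derivative_pow_apply_X_pow_of_lt (J ^ _) n.lt_succ_self]
    simp
  · rw [hJ.pow_mul_derivative_pow_apply_X_pow_s17 hjn.le,
      hJ.pow_mul_derivative_pow_apply_X_pow_s17 (Nat.succ_le_of_lt hjn),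
      show n - (j + 1) + (i + 1) = n - j + i by omega, if_neg (by omega)]
    simp

theorem span_pow_mul_derivative_pow_sub_eq (S : Set ℕ) :
    Submodule.span K
        {f | ∃ i j : ℕ, i ∈ S ∧ f = J ^ j * derivative ^ i - J ^ (j + 1) * derivative ^ (i + 1)} =
      Submodule.span K {f | ∃ i j : ℕ, i ∈ S ∧ f = (lcoeff K i).smulRight (X ^ j)} := by
  apply le_antisymm <;> rw [Submodule.span_le]
  · rintro f ⟨i, j, hi, rfl⟩
    rw [hJ.pow_mul_derivative_pow_sub_eq]
    exact Submodule.smul_mem _ _ (Submodule.subset_span ⟨i, j, hi, rfl⟩)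
  · rintro f ⟨i, j, hi, rfl⟩
    have hc : ((i ! : K) / j !) ≠ 0 :=
      div_ne_zero (Nat.cast_ne_zero.2 i.factorial_ne_zero) (Nat.cast_ne_zero.2 j.factorial_ne_zero)
    rw [← inv_smul_smul₀ hc ((lcoeff K i).smulRight (X ^ j)), ← hJ.pow_mul_derivative_pow_sub_eq]
    exact Submodule.smul_mem _ _ (Submodule.subset_span ⟨i, j, hi, rfl⟩)

theorem mem_span_pow_mul_derivative_pow_sub_iff {S : Set ℕ} (hS : S.Finite)
    (a : Module.End K K[X]) :
    a ∈ Submodule.span K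
        {f | ∃ i j : ℕ, i ∈ S ∧ f = J ^ j * derivative ^ i - J ^ (j + 1) * derivative ^ (i + 1)} ↔
      ∀ n ∉ S, a (X ^ n) = 0 := by
  rw [hJ.span_pow_mul_derivative_pow_sub_eq, mem_span_smulRight_lcoeff_iff hS]

end IsIntegration_s17

end Polynomial

/-- For a nonzero polynomial `α`, the left annihilator of `α(H)` in `𝕀₁` is contained in
`F = span_K {e i j}`; more precisely, it equals `⊕_{i : α(i+1)=0} ⊕_{j} K e_{j i}`. -/
theorem left_annihilator_of_alpha_H (K : Type*) [Field K] [CharZero K]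
    (D J Mx H : Module.End K (Polynomial K))
    (hD : ∀ p : Polynomial K, D p = derivative p)
    (hJ : ∀ n : ℕ, J (X ^ n) = ((n : K) + 1)⁻¹ • X ^ (n + 1))
    (hMx : ∀ p : Polynomial K, Mx p = X * p)
    (hH : H = D * Mx)
    (e : ℕ → ℕ → Module.End K (Polynomial K))
    (he : ∀ i j, e i j = J ^ i * D ^ j - J ^ (i + 1) * D ^ (j + 1))
    (A : Subalgebra K (Module.End K (Polynomial K)))
    (hA : A = Algebra.adjoin K {Mx, D, J})
    (F : Submodule K (Module.End K (Polynomial K)))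
    (hF : F = Submodule.span K {f | ∃ i j, f = e i j})
    (α : Polynomial K) (hα : α ≠ 0) :
    {a : Module.End K (Polynomial K) | a ∈ A ∧ a * Polynomial.aeval H α = 0} ⊆ ↑F ∧
    {a : Module.End K (Polynomial K) | a ∈ A ∧ a * Polynomial.aeval H α = 0} =
      ↑(Submodule.span K
        {f | ∃ i j : ℕ, Polynomial.eval ((i : K) + 1) α = 0 ∧ f = e j i}) := by
  obtain rfl : D = derivative := LinearMap.ext hD
  obtain rfl := funext₂ he
  set G := Submodule.span K {f | ∃ i j : ℕ, α.eval ((i : K) + 1) = 0 ∧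
    f = J ^ j * derivative ^ i - J ^ (j + 1) * derivative ^ (i + 1)}
  have hroots : {n : ℕ | α.eval ((n : K) + 1) = 0}.Finite :=
    (finite_setOfPred_isRoot hα).preimage ((add_left_injective 1).comp Nat.cast_injective).injOn
  have hmem (a : Module.End K K[X]) : a ∈ G ↔ ∀ n : ℕ, α.eval ((n : K) + 1) ≠ 0 → a (X ^ n) = 0 :=
    IsIntegration_s17.mem_span_pow_mul_derivative_pow_sub_iff hJ hroots a
  have hJA : J ∈ A := hA ▸ Algebra.subset_adjoin (by simp)
  have hDA : derivative ∈ A := hA ▸ Algebra.subset_adjoin (by simp)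
  have hG_le : G ≤ Subalgebra.toSubmodule A := Submodule.span_le.2 fun f ⟨_, _, _, hf⟩ => by
    rw [SetLike.mem_coe, Subalgebra.mem_toSubmodule, hf]
    exact sub_mem (mul_mem (pow_mem hJA _) (pow_mem hDA _))
      (mul_mem (pow_mem hJA _) (pow_mem hDA _))
  have hHX (n : ℕ) : H (X ^ n) = ((n : K) + 1) • X ^ n := by
    rw [hH, Module.End.mul_apply, hMx, derivative_X_mul_X_pow]
  have hann : {a | a ∈ A ∧ a * aeval H α = 0} = G := Set.ext fun a => by
    rw [Set.mem_ofPred_eq, mul_aeval_eq_zero_iff hHX, SetLike.mem_coe, hmem]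
    exact and_iff_right_of_imp fun h => hG_le ((hmem a).2 h)
  refine ⟨hann ▸ ?_, hann⟩
  rw [hF]
  exact Submodule.span_mono fun f ⟨i, j, _, hf⟩ => ⟨j, i, hf⟩
end

section
/- The algebra 𝕀₁ admits an involution * determined by ∂* = ∫, ∫* = ∂, H* = H; i.e., there exists a K-linear anti-automorphism * : 𝕀₁ → 𝕀₁ with (ab)* = b*a*, *∘* = id, sending ∂ ↦ ∫, ∫ ↦ ∂. Moreover e_{ij}* = e_{ji} for all i,j. -/
/-!
On `K[X]` the symmetric bilinear form with `⟨X ^ n, X ^ m⟩ = (n !) ^ 2 δₙₘ` is nondegenerate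
(in characteristic zero). With respect to it `∂` and `∫` are adjoint to each other, `x` has adjoint
`∂ x ∂` and `H = ∂ x` is self-adjoint. Hence every element of `𝕀₁ = K⟨x, ∂, ∫⟩` has an adjoint in
`𝕀₁`, and by uniqueness of adjoints `a ↦ a*` is a linear anti-automorphism of order two.
Since `(∫ ^ i ∂ ^ j)* = ∫ ^ j ∂ ^ i`, it sends `e i j` to `e j i`.
-/

open Polynomial LinearMap LinearMap.BilinForm
open scoped Nat

namespace LinearMap.IsAdjointPair

section CommSemiring

variable {R M : Type*} [CommSemiring R] [AddCommMonoid M] [Module R M]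
  {B : LinearMap.BilinForm R M}

theorem symm_of_isSymm (hB : B.IsSymm) {f g : Module.End R M} (h : IsAdjointPair B B f g) :
    IsAdjointPair B B g f := fun x y => by
  rw [hB.eq, ← h, hB.eq]

theorem pow {f g : Module.End R M} (h : IsAdjointPair B B f g) (n : ℕ) :
    IsAdjointPair B B ⇑(f ^ n) ⇑(g ^ n) := by
  induction n with
  | zero => exact isAdjointPair_one
  | succ n ih => rw [pow_succ, pow_succ']; exact ih.mul h

end CommSemiring

theorem eq_of_nondegenerate {R M : Type*} [CommRing R] [AddCommGroup M] [Module R M]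
    {B : LinearMap.BilinForm R M} (hB : B.Nondegenerate) {f g₁ g₂ : Module.End R M}
    (h₁ : IsAdjointPair B B f g₁) (h₂ : IsAdjointPair B B f g₂) : g₁ = g₂ :=
  B.flip.isAdjointPair_unique_of_nondegenerate hB.flip f g₁ g₂
    (fun x y => (h₁ y x).symm) (fun x y => (h₂ y x).symm)

end LinearMap.IsAdjointPair

namespace LinearMap.BilinForm

variable {R M : Type*} [CommRing R] [AddCommGroup M] [Module R M] {B : LinearMap.BilinForm R M}

theorem exists_isAdjointPair_of_mem_adjoin {S : Set (Module.End R M)}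
    (hS : ∀ s ∈ S, ∃ t ∈ Algebra.adjoin R S, IsAdjointPair B B s t)
    {a : Module.End R M} (ha : a ∈ Algebra.adjoin R S) :
    ∃ t ∈ Algebra.adjoin R S, IsAdjointPair B B a t := by
  induction ha using Algebra.adjoin_induction with
  | mem s hs => exact hS s hs
  | algebraMap r =>
    refine ⟨algebraMap R _ r, Subalgebra.algebraMap_mem _ r, ?_⟩
    rw [Algebra.algebraMap_eq_smul_one]
    exact isAdjointPair_one.smul r
  | add a b _ _ ha hb =>
    obtain ⟨s, hs, hsa⟩ := ha
    obtain ⟨t, ht, htb⟩ := hb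
    exact ⟨s + t, add_mem hs ht, hsa.add htb⟩
  | mul a b _ _ ha hb =>
    obtain ⟨s, hs, hsa⟩ := ha
    obtain ⟨t, ht, htb⟩ := hb
    exact ⟨t * s, mul_mem ht hs, hsa.mul htb⟩

variable (hB : B.Nondegenerate) {A : Subalgebra R (Module.End R M)}
  (hA : ∀ a ∈ A, ∃ t ∈ A, IsAdjointPair B B a t)

noncomputable def adjointOn : ↥A →ₗ[R] ↥A where
  toFun a := ⟨(hA a a.2).choose, (hA a a.2).choose_spec.1⟩
  map_add' a b := Subtype.ext <| (hA _ (a + b).2).choose_spec.2.eq_of_nondegenerate hB <|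
    (hA a a.2).choose_spec.2.add (hA b b.2).choose_spec.2
  map_smul' r a := Subtype.ext <| (hA _ (r • a).2).choose_spec.2.eq_of_nondegenerate hB <|
    (hA a a.2).choose_spec.2.smul r

theorem isAdjointPair_adjointOn (a : A) :
    IsAdjointPair B B (a : Module.End R M) (adjointOn hB hA a : Module.End R M) :=
  (hA a a.2).choose_spec.2

theorem adjointOn_eq {a t : A} (h : IsAdjointPair B B (a : Module.End R M) (t : Module.End R M)) :
    adjointOn hB hA a = t :=
  Subtype.ext <| (isAdjointPair_adjointOn hB hA a).eq_of_nondegenerate hB h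

theorem adjointOn_mul (a b : A) :
    adjointOn hB hA (a * b) = adjointOn hB hA b * adjointOn hB hA a :=
  adjointOn_eq hB hA <| (isAdjointPair_adjointOn hB hA a).mul (isAdjointPair_adjointOn hB hA b)

theorem adjointOn_adjointOn (hS : B.IsSymm) (a : A) : adjointOn hB hA (adjointOn hB hA a) = a :=
  adjointOn_eq hB hA <| (isAdjointPair_adjointOn hB hA a).symm_of_isSymm hS

end LinearMap.BilinForm

section FactorialPairing

variable (R : Type*) [CommSemiring R]

noncomputable def factorialPairing : LinearMap.BilinForm R R[X] :=
  (basisMonomials R).constr R fun n => ((n ! : R) ^ 2) • lcoeff R n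

variable {R}

theorem basisMonomials_apply (n : ℕ) : basisMonomials R n = X ^ n := by
  rw [coe_basisMonomials, X_pow_eq_monomial]

theorem factorialPairing_X_pow_left (n : ℕ) (q : R[X]) :
    factorialPairing R (X ^ n) q = (n ! : R) ^ 2 * q.coeff n := by
  rw [factorialPairing, ← basisMonomials_apply, Module.Basis.constr_basis]
  rfl

theorem factorialPairing_X_pow_X_pow (n m : ℕ) :
    factorialPairing R (X ^ n) (X ^ m) = if n = m then (n ! : R) ^ 2 else 0 := by
  rw [factorialPairing_X_pow_left, coeff_X_pow]
  split_ifs <;> simp_all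

theorem factorialPairing_isSymm : (factorialPairing R).IsSymm := by
  rw [BilinForm.isSymm_iff_basis (basisMonomials R)]
  intro n m
  simp only [basisMonomials_apply, factorialPairing_X_pow_X_pow]
  split_ifs <;> simp_all

theorem factorialPairing_X_pow_right (p : R[X]) (m : ℕ) :
    factorialPairing R p (X ^ m) = (m ! : R) ^ 2 * p.coeff m := by
  rw [factorialPairing_isSymm.eq, factorialPairing_X_pow_left]

theorem factorialPairing_nondegenerate [IsDomain R] [CharZero R] :
    (factorialPairing R).Nondegenerate := by
  refine IsOrthoᵢ.nondegenerate_of_not_isOrtho_basis_self (basisMonomials R) ?_ fun n => ?_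
  · intro n m hnm
    simp [Function.onFun, basisMonomials_apply, factorialPairing_X_pow_X_pow, hnm]
  · simp [basisMonomials_apply, factorialPairing_X_pow_X_pow, n.factorial_ne_zero]

theorem isAdjointPair_factorialPairing_of_coeff {f g : Module.End R R[X]}
    (h : ∀ n m, (m ! : R) ^ 2 * (f (X ^ n)).coeff m = (n ! : R) ^ 2 * (g (X ^ m)).coeff n) :
    IsAdjointPair (factorialPairing R) (factorialPairing R) f g := by
  rw [isAdjointPair_iff_comp_eq_compl₂]
  refine LinearMap.ext_basis (basisMonomials R) (basisMonomials R) fun n m => ?_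
  simp only [basisMonomials_apply, LinearMap.comp_apply, compl₂_apply,
    factorialPairing_X_pow_left, factorialPairing_X_pow_right, h]

end FactorialPairing

section Operators

variable {R : Type*} [CommSemiring R]

theorem isAdjointPair_mulLeft_X :
    IsAdjointPair (factorialPairing R) (factorialPairing R) (mulLeft R (X : R[X]))
      (derivative * mulLeft R X * derivative : Module.End R R[X]) := by
  refine isAdjointPair_factorialPairing_of_coeff fun n m => ?_
  simp only [Module.End.mul_apply, mulLeft_apply, coeff_derivative, coeff_X_mul, ← pow_succ',
    coeff_X_pow]
  obtain rfl | hm := eq_or_ne m (n + 1)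
  · simp only [if_true, Nat.factorial_succ]
    push_cast
    ring
  · simp [hm, hm.symm]

theorem isAdjointPair_derivative_mulLeft_X :
    IsAdjointPair (factorialPairing R) (factorialPairing R)
      (derivative * mulLeft R X : Module.End R R[X])
      (derivative * mulLeft R X : Module.End R R[X]) := by
  refine isAdjointPair_factorialPairing_of_coeff fun n m => ?_
  simp only [Module.End.mul_apply, mulLeft_apply, coeff_derivative, coeff_X_mul, coeff_X_pow]
  obtain rfl | hnm := eq_or_ne n m
  · rfl
  · simp [hnm, hnm.symm]

theorem isAdjointPair_derivative {K : Type*} [Field K] [CharZero K] {J : Module.End K K[X]}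
    (hJ : ∀ n : ℕ, J (X ^ n) = ((n : K) + 1)⁻¹ • X ^ (n + 1)) :
    IsAdjointPair (factorialPairing K) (factorialPairing K) derivative J := by
  refine isAdjointPair_factorialPairing_of_coeff fun n m => ?_
  simp only [hJ, coeff_derivative, coeff_smul, coeff_X_pow, smul_eq_mul]
  obtain rfl | hn := eq_or_ne n (m + 1)
  · simp only [if_true, Nat.factorial_succ]
    push_cast
    field_simp
  · simp [hn, hn.symm]

end Operators

/-- The algebra `𝕀₁` admits an involution `*`: a `K`-linear anti-automorphism of order two
with `∂* = ∫`, `∫* = ∂`, `H* = H` and `(e i j)* = e j i`. -/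
theorem I1_involution (K : Type*) [Field K] [CharZero K]
    (D J Mx H : Module.End K (Polynomial K))
    (hD : ∀ p : Polynomial K, D p = derivative p)
    (hJ : ∀ n : ℕ, J (X ^ n) = ((n : K) + 1)⁻¹ • X ^ (n + 1))
    (hMx : ∀ p : Polynomial K, Mx p = X * p)
    (hH : H = D * Mx)
    (e : ℕ → ℕ → Module.End K (Polynomial K))
    (he : ∀ i j, e i j = J ^ i * D ^ j - J ^ (i + 1) * D ^ (j + 1))
    (A : Subalgebra K (Module.End K (Polynomial K)))
    (hA : A = Algebra.adjoin K {Mx, D, J})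
    (hDA : D ∈ A) (hJA : J ∈ A) (hHA : H ∈ A) (heA : ∀ i j, e i j ∈ A) :
    ∃ σ : A →ₗ[K] A,
      (∀ a b : A, σ (a * b) = σ b * σ a) ∧
      (∀ a : A, σ (σ a) = a) ∧
      σ ⟨D, hDA⟩ = ⟨J, hJA⟩ ∧
      σ ⟨J, hJA⟩ = ⟨D, hDA⟩ ∧
      σ ⟨H, hHA⟩ = ⟨H, hHA⟩ ∧
      (∀ i j, σ ⟨e i j, heA i j⟩ = ⟨e j i, heA j i⟩) := by
  obtain rfl : D = derivative := LinearMap.ext hD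
  obtain rfl : Mx = mulLeft K X := LinearMap.ext hMx
  subst hH hA
  have hDJ := isAdjointPair_derivative hJ
  have hJD := hDJ.symm_of_isSymm factorialPairing_isSymm
  have hMxA : mulLeft K X ∈ Algebra.adjoin K {mulLeft K X, derivative, J} :=
    Algebra.subset_adjoin (by simp)
  have hclosed : ∀ a ∈ Algebra.adjoin K {mulLeft K X, derivative, J},
      ∃ t ∈ Algebra.adjoin K {mulLeft K X, derivative, J},
        IsAdjointPair (factorialPairing K) (factorialPairing K) a t := by
    refine fun a => exists_isAdjointPair_of_mem_adjoin ?_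
    rintro s (rfl | rfl | rfl)
    · exact ⟨_, mul_mem (mul_mem hDA hMxA) hDA, isAdjointPair_mulLeft_X⟩
    · exact ⟨J, hJA, hDJ⟩
    · exact ⟨derivative, hDA, hJD⟩
  have hB := factorialPairing_nondegenerate (R := K)
  refine ⟨adjointOn hB hclosed, adjointOn_mul hB hclosed,
    adjointOn_adjointOn hB hclosed factorialPairing_isSymm, adjointOn_eq hB hclosed hDJ,
    adjointOn_eq hB hclosed hJD, adjointOn_eq hB hclosed isAdjointPair_derivative_mulLeft_X,
    fun i j => adjointOn_eq hB hclosed ?_⟩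
  simp only [he]
  exact ((hJD.pow i).mul (hDJ.pow j)).sub ((hJD.pow (i + 1)).mul (hDJ.pow (j + 1)))
end
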